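/- Let A ∈ ℝ^{n×n}, 1 ≤ s < d(A), and consider the ACI(s) with unit initial vector v₀ satisfying d(A,v₀) ≥ s+1. If v_* is a limit point of the sequence {v_k}, then v_* is a fixed point of the composite map T_{Aᵀ} ∘ T_A, i.e., v_* = T_{Aᵀ}(T_A(v_*)); moreover ‖v_*‖ = 1 and d(A,v_*) ≥ s+1. -/

import Mathlib

open Polynomial Filter Topology Matrix

noncomputable section

def mulv {ι : Type*} [Fintype ι] (A : Matrix ι ι ℝ) (v : EuclideanSpace ℝ ι) :
    EuclideanSpace ℝ ι :=
  (WithLp.equiv 2 (ι → ℝ)).symm (A.mulVec ((WithLp.equiv 2 (ι → ℝ)) v))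

def Krylov {ι : Type*} [Fintype ι] [DecidableEq ι] (A : Matrix ι ι ℝ) (s : ℕ) (v : EuclideanSpace ℝ ι) :
    Submodule ℝ (EuclideanSpace ℝ ι) :=
  Submodule.span ℝ (Set.range fun i : Fin s => mulv (A ^ (i : ℕ)) v)

def IsArnoldiProj {ι : Type*} [Fintype ι] [DecidableEq ι] (A : Matrix ι ι ℝ) (s : ℕ)
    (v w : EuclideanSpace ℝ ι) : Prop :=
  w - mulv (A ^ s) v ∈ Krylov A s v ∧ ∀ u ∈ Krylov A s v, inner ℝ w u = (0 : ℝ)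

def vgrade {ι : Type*} [Fintype ι] [DecidableEq ι] (A : Matrix ι ι ℝ)
    (v : EuclideanSpace ℝ ι) : ℕ :=
  sInf {d | ∃ p : ℝ[X], p ≠ 0 ∧ p.natDegree = d ∧ mulv (aeval A p) v = 0}

def dmin {ι : Type*} [Fintype ι] [DecidableEq ι] (A : Matrix ι ι ℝ) : ℕ :=
  (minpoly ℝ A).natDegree

def Phi {ι : Type*} [Fintype ι] [DecidableEq ι] (A : Matrix ι ι ℝ) (s : ℕ) : ℝ :=
  sSup {r | ∃ v : EuclideanSpace ℝ ι, ‖v‖ = 1 ∧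
    r = sInf {t | ∃ q : ℝ[X], q.Monic ∧ q.natDegree = s ∧ t = ‖mulv (aeval A q) v‖}}

def opNorm {ι : Type*} [Fintype ι] [DecidableEq ι] (A : Matrix ι ι ℝ) : ℝ :=
  ‖Matrix.toEuclideanCLM (𝕜 := ℝ) A‖

def ACI {ι : Type*} [Fintype ι] [DecidableEq ι] (A : Matrix ι ι ℝ) (s : ℕ)
    (v wt w vt : ℕ → EuclideanSpace ℝ ι) : Prop :=
  (∀ k, IsArnoldiProj A s (v k) (wt k)) ∧
  (∀ k, w k = ‖wt k‖⁻¹ • wt k) ∧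
  (∀ k, IsArnoldiProj Aᵀ s (w k) (vt (k + 1))) ∧
  (∀ k, v (k + 1) = ‖vt (k + 1)‖⁻¹ • vt (k + 1))

def aproj {ι : Type*} [Fintype ι] [DecidableEq ι] (A : Matrix ι ι ℝ) (s : ℕ)
    (v : EuclideanSpace ℝ ι) : EuclideanSpace ℝ ι :=
  mulv (A ^ s) v - (Submodule.orthogonalProjectionOnto (Krylov A s v) (mulv (A ^ s) v) : EuclideanSpace ℝ ι)

def TA {ι : Type*} [Fintype ι] [DecidableEq ι] (A : Matrix ι ι ℝ) (s : ℕ)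
    (v : EuclideanSpace ℝ ι) : EuclideanSpace ℝ ι :=
  ‖aproj A s v‖⁻¹ • aproj A s v


/-! The key identity `⟪P_s(Aᵀ; w) w, v⟫ = ‖P_s(A; v) v‖` for `w = T_A v`, together with
Cauchy–Schwarz, shows that the norms `σₖ = ‖P_s(A; vₖ) vₖ‖` and `τₖ = ‖P_s(Aᵀ; wₖ) wₖ‖`
interlace, `σₖ ≤ τₖ ≤ σₖ₊₁`. Being bounded by `‖Aˢ‖` they converge to a common positive limit,
so `⟪vₖ₊₁, vₖ⟫ = σₖ / τₖ → 1` and `‖vₖ₊₁ - vₖ‖ → 0`. By minimality of the Arnoldi projection,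
`‖q(A) vₖ‖ ≥ σ₀ > 0` for every monic `q` of degree `s`; this bound survives in the limit, so
`v_*` (and likewise `T_A v_*`) has grade greater than `s`. There the Krylov vectors are
independent, so the projection is given by the inverse Gram matrix and `T_A` is continuous;
passing to the limit along `v_{φ j}` and `v_{φ j + 1}` gives `v_* = T_{Aᵀ} (T_A v_*)`. -/

section GramProjection

variable {E : Type*} [NormedAddCommGroup E] [InnerProductSpace ℝ E] [FiniteDimensional ℝ E]
  {κ : Type*} [Fintype κ] [DecidableEq κ]

lemma starProjection_span_eq_sum {b : κ → E} (hb : LinearIndependent ℝ b) (y : E) :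
    (Submodule.span ℝ (Set.range b)).starProjection y =
      ∑ i, ((Matrix.gram ℝ b)⁻¹ *ᵥ fun j => inner ℝ (b j) y) i • b i := by
  set c := (Matrix.gram ℝ b)⁻¹ *ᵥ fun j => inner ℝ (b j) y
  have hG : IsUnit (Matrix.gram ℝ b).det :=
    isUnit_iff_ne_zero.2 (Matrix.det_gram_ne_zero_iff_linearIndependent.2 hb)
  have hc : Matrix.gram ℝ b *ᵥ c = fun j => inner ℝ (b j) y := by
    rw [Matrix.mulVec_mulVec, Matrix.mul_nonsing_inv _ hG, Matrix.one_mulVec]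
  refine Submodule.eq_starProjection_of_mem_orthogonal
    (Submodule.sum_mem _ fun i _ => Submodule.smul_mem _ _ (Submodule.subset_span ⟨i, rfl⟩)) ?_
  refine (Submodule.mem_orthogonal _ _).2 fun u hu => ?_
  induction hu using Submodule.span_induction with
  | mem _ hu =>
    obtain ⟨j, rfl⟩ := hu
    have hcj := congrFun hc j
    simp only [Matrix.mulVec, dotProduct, Matrix.gram_apply] at hcj
    simp only [inner_sub_right, inner_sum, real_inner_smul_right, ← hcj]
    simp [mul_comm]
  | zero => simp
  | add u v _ _ hu hv => rw [inner_add_left, hu, hv, add_zero]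
  | smul a u _ hu => rw [real_inner_smul_left, hu, mul_zero]

lemma continuousAt_starProjection_span {X : Type*} [TopologicalSpace X] {b : X → κ → E}
    {y : X → E} {x₀ : X} (hb : Continuous b) (hy : Continuous y)
    (h₀ : LinearIndependent ℝ (b x₀)) :
    ContinuousAt (fun x => (Submodule.span ℝ (Set.range (b x))).starProjection (y x)) x₀ := by
  have hb' (i : κ) : Continuous fun x => b x i := (continuous_apply i).comp hb
  have hgram : Continuous fun x => Matrix.gram ℝ (b x) :=
    continuous_matrix fun i j => (hb' i).inner (hb' j)
  have hdet : (Matrix.gram ℝ (b x₀)).det ≠ 0 :=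
    Matrix.det_gram_ne_zero_iff_linearIndependent.2 h₀
  have hinv : ContinuousAt (fun x => (Matrix.gram ℝ (b x))⁻¹) x₀ :=
    (continuousAt_matrix_inv _ (by simpa [Ring.inverse_eq_inv'] using continuousAt_inv₀ hdet)).comp
      hgram.continuousAt
  have hindep : ∀ᶠ x in 𝓝 x₀, LinearIndependent ℝ (b x) := by
    simp_rw [← Matrix.det_gram_ne_zero_iff_linearIndependent]
    exact hgram.matrix_det.continuousAt.eventually_ne hdet
  refine ContinuousAt.congr ?_ (hindep.mono fun x hx => (starProjection_span_eq_sum hx (y x)).symm)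
  refine tendsto_finsetSum _ fun i _ => ContinuousAt.smul ?_ (hb' i).continuousAt
  simp only [Matrix.mulVec, dotProduct]
  refine tendsto_finsetSum _ fun j _ => ContinuousAt.mul ?_ ((hb' j).inner hy).continuousAt
  exact (continuous_apply_apply i j).continuousAt.comp hinv

end GramProjection

lemma tendsto_sub_nhds_zero_of_inner_tendsto_one {E : Type*} [NormedAddCommGroup E]
    [InnerProductSpace ℝ E] {a b : ℕ → E} (ha : ∀ k, ‖a k‖ = 1) (hb : ∀ k, ‖b k‖ = 1)
    (h : Tendsto (fun k => inner ℝ (a k) (b k)) atTop (𝓝 1)) :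
    Tendsto (fun k => a k - b k) atTop (𝓝 0) := by
  rw [tendsto_zero_iff_norm_tendsto_zero]
  have hexp (k : ℕ) : ‖a k - b k‖ ^ 2 = 2 - 2 * inner ℝ (a k) (b k) := by
    rw [norm_sub_sq_real, ha, hb]; ring
  have hsq : Tendsto (fun k => ‖a k - b k‖ ^ 2) atTop (𝓝 0) := by
    simpa [hexp] using (tendsto_const_nhds (x := (2 : ℝ))).sub (h.const_mul 2)
  simpa [Real.sqrt_sq (norm_nonneg _)] using hsq.sqrt

lemma norm_inv_norm_smul {E : Type*} [NormedAddCommGroup E] [NormedSpace ℝ E] {x : E}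
    (hx : x ≠ 0) : ‖‖x‖⁻¹ • x‖ = 1 := by
  simpa using norm_smul_inv_norm (𝕜 := ℝ) hx

variable {ι : Type*} [Fintype ι] [DecidableEq ι]

lemma mulv_eq_toEuclideanCLM (A : Matrix ι ι ℝ) (x : EuclideanSpace ℝ ι) :
    mulv A x = Matrix.toEuclideanCLM (𝕜 := ℝ) A x := rfl

lemma continuous_mulv (A : Matrix ι ι ℝ) : Continuous (mulv A) :=
  (Matrix.toEuclideanCLM (𝕜 := ℝ) A).continuous

lemma mulv_zero (A : Matrix ι ι ℝ) : mulv A 0 = 0 :=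
  map_zero (Matrix.toEuclideanCLM (𝕜 := ℝ) A)

lemma zero_mulv (x : EuclideanSpace ℝ ι) : mulv 0 x = 0 := by
  simp [mulv_eq_toEuclideanCLM]

lemma mulv_mul (A B : Matrix ι ι ℝ) (x : EuclideanSpace ℝ ι) :
    mulv (A * B) x = mulv A (mulv B x) := by
  simp only [mulv_eq_toEuclideanCLM, map_mul]; rfl

lemma mulv_sub_left (A B : Matrix ι ι ℝ) (x : EuclideanSpace ℝ ι) :
    mulv (A - B) x = mulv A x - mulv B x := by
  simp only [mulv_eq_toEuclideanCLM, map_sub]; rfl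

lemma mulv_aeval_sum (A : Matrix ι ι ℝ) {s : ℕ} (c : Fin s → ℝ) (x : EuclideanSpace ℝ ι) :
    mulv (aeval A (∑ i, C (c i) * X ^ (i : ℕ))) x = ∑ i, c i • mulv (A ^ (i : ℕ)) x := by
  simp only [map_sum, _root_.map_mul, aeval_C, map_pow, aeval_X, ← Algebra.smul_def,
    mulv_eq_toEuclideanCLM, map_smul, _root_.sum_apply, _root_.smul_apply]

lemma inner_mulv_left (A : Matrix ι ι ℝ) (x y : EuclideanSpace ℝ ι) :
    inner ℝ (mulv A x) y = inner ℝ x (mulv Aᵀ y) := by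
  simp only [mulv_eq_toEuclideanCLM]
  rw [← ContinuousLinearMap.adjoint_inner_right, ← ContinuousLinearMap.star_eq_adjoint,
    ← map_star]
  simp [Matrix.star_eq_conjTranspose]

lemma inner_mulv_transpose_pow (A : Matrix ι ι ℝ) (i : ℕ) (x y : EuclideanSpace ℝ ι) :
    inner ℝ (mulv (Aᵀ ^ i) x) y = inner ℝ x (mulv (A ^ i) y) := by
  rw [inner_mulv_left, ← transpose_pow, transpose_transpose]

lemma mem_krylov_iff {A : Matrix ι ι ℝ} {s : ℕ} {x u : EuclideanSpace ℝ ι} :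
    u ∈ Krylov A s x ↔ ∃ r : ℝ[X], r.degree < s ∧ mulv (aeval A r) x = u := by
  rw [Krylov, Submodule.mem_span_range_iff_exists_fun]
  constructor
  · rintro ⟨c, rfl⟩
    exact ⟨_, degree_sum_fin_lt c, mulv_aeval_sum A c x⟩
  · rintro ⟨r, hr, rfl⟩
    have hsum : ∑ i : Fin s, C (r.coeff i) * X ^ (i : ℕ) = r :=
      (sum_fin (fun i a => C a * X ^ i) (by simp) hr).trans r.sum_C_mul_X_pow_eq
    exact ⟨fun i => r.coeff i, by rw [← mulv_aeval_sum, hsum]⟩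

def GradeExceeds (A : Matrix ι ι ℝ) (s : ℕ) (x : EuclideanSpace ℝ ι) : Prop :=
  ∀ p : ℝ[X], p ≠ 0 → p.natDegree ≤ s → mulv (aeval A p) x ≠ 0

lemma le_vgrade_iff {A : Matrix ι ι ℝ} {s : ℕ} {x : EuclideanSpace ℝ ι} :
    s + 1 ≤ vgrade A x ↔ GradeExceeds A s x := by
  have hne : {d | ∃ p : ℝ[X], p ≠ 0 ∧ p.natDegree = d ∧ mulv (aeval A p) x = 0}.Nonempty :=
    ⟨_, minpoly ℝ A, minpoly.ne_zero (Algebra.IsIntegral.isIntegral A), rfl,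
      by rw [minpoly.aeval, zero_mulv]⟩
  rw [vgrade, le_csInf_iff'' hne]
  refine ⟨fun h p hp hps hpx => ?_, ?_⟩
  · have := h _ ⟨p, hp, rfl, hpx⟩
    omega
  · rintro h _ ⟨p, hp, rfl, hpx⟩
    by_contra! hps
    exact h p hp (by omega) hpx

lemma gradeExceeds_of_monic {A : Matrix ι ι ℝ} {s : ℕ} {x : EuclideanSpace ℝ ι}
    (h : ∀ q : ℝ[X], q.Monic → q.natDegree = s → mulv (aeval A q) x ≠ 0) :
    GradeExceeds A s x := by
  intro p hp hps hpx
  have hlc : p.leadingCoeff⁻¹ * p.leadingCoeff = 1 :=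
    inv_mul_cancel₀ (leadingCoeff_ne_zero.2 hp)
  have hmonic : (C p.leadingCoeff⁻¹ * p).Monic := monic_C_mul_of_mul_leadingCoeff_eq_one hlc
  refine h (X ^ (s - p.natDegree) * (C p.leadingCoeff⁻¹ * p)) ((monic_X_pow _).mul hmonic) ?_ ?_
  · rw [(monic_X_pow _).natDegree_mul hmonic, natDegree_X_pow,
      natDegree_C_mul (inv_ne_zero (leadingCoeff_ne_zero.2 hp))]
    omega
  · rw [← mul_assoc, _root_.map_mul, mulv_mul, hpx, mulv_zero]

lemma linearIndependent_krylov {A : Matrix ι ι ℝ} {s : ℕ} {x : EuclideanSpace ℝ ι}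
    (h : GradeExceeds A s x) : LinearIndependent ℝ fun i : Fin s => mulv (A ^ (i : ℕ)) x := by
  rw [Fintype.linearIndependent_iff]
  intro c hc j
  have hp : ∑ i : Fin s, C (c i) * X ^ (i : ℕ) = 0 := by
    by_contra hne
    refine h _ hne ?_ (by rw [mulv_aeval_sum, hc])
    exact ((natDegree_lt_iff_degree_lt hne).2 (degree_sum_fin_lt c)).le
  simpa [Fin.val_inj] using congrArg (coeff · j) hp

lemma gradeExceeds_of_tendsto {A : Matrix ι ι ℝ} {s : ℕ} {x : ℕ → EuclideanSpace ℝ ι}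
    {x₀ : EuclideanSpace ℝ ι} (hx : Tendsto x atTop (𝓝 x₀)) {δ : ℝ} (hδ : 0 < δ)
    (h : ∀ k (q : ℝ[X]), q.Monic → q.natDegree = s → δ ≤ ‖mulv (aeval A q) (x k)‖) :
    GradeExceeds A s x₀ := by
  refine gradeExceeds_of_monic fun q hq hqs h0 => hδ.not_ge ?_
  have hlim := ((continuous_mulv (aeval A q)).tendsto x₀).norm.comp hx
  rw [h0, norm_zero] at hlim
  exact ge_of_tendsto hlim (Eventually.of_forall fun k => h k q hq hqs)

lemma isArnoldiProj_aproj (A : Matrix ι ι ℝ) (s : ℕ) (x : EuclideanSpace ℝ ι) :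
    IsArnoldiProj A s x (aproj A s x) := by
  refine ⟨by simp [aproj], fun u hu => ?_⟩
  simpa [aproj] using Submodule.starProjection_inner_eq_zero _ u hu

namespace IsArnoldiProj

variable {A : Matrix ι ι ℝ} {s : ℕ} {x w y : EuclideanSpace ℝ ι}

lemma unique (hw : IsArnoldiProj A s x w) (hy : IsArnoldiProj A s x y) : w = y := by
  have hmem : w - y ∈ Krylov A s x := by simpa using (Krylov A s x).sub_mem hw.1 hy.1
  rw [← sub_eq_zero, ← inner_self_eq_zero (𝕜 := ℝ), inner_sub_left, hw.2 _ hmem, hy.2 _ hmem,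
    sub_zero]

lemma inner_mulv_pow (hw : IsArnoldiProj A s x w) : inner ℝ w (mulv (A ^ s) x) = ‖w‖ ^ 2 := by
  have := hw.2 _ hw.1
  rw [inner_sub_right, real_inner_self_eq_norm_sq] at this
  linarith

lemma aeval_sub_mem (hw : IsArnoldiProj A s x w) {q : ℝ[X]} (hq : q.Monic)
    (hqs : q.natDegree = s) : mulv (aeval A q) x - w ∈ Krylov A s x := by
  have hdq : q.degree = s := by rw [degree_eq_natDegree hq.ne_zero, hqs]
  have hdeg : (q - X ^ s).degree < (s : WithBot ℕ) := by
    rw [← hdq]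
    exact degree_sub_lt_left (by rw [hdq, degree_X_pow]) hq.ne_zero
      (by rw [hq.leadingCoeff, (monic_X_pow s).leadingCoeff])
  have hr : mulv (aeval A (q - X ^ s)) x ∈ Krylov A s x := mem_krylov_iff.2 ⟨_, hdeg, rfl⟩
  convert (Krylov A s x).sub_mem hr hw.1 using 1
  rw [map_sub, map_pow, aeval_X, mulv_sub_left]
  abel

lemma norm_le (hw : IsArnoldiProj A s x w) {q : ℝ[X]} (hq : q.Monic) (hqs : q.natDegree = s) :
    ‖w‖ ≤ ‖mulv (aeval A q) x‖ := by
  have hpyth := norm_add_sq_eq_norm_sq_add_norm_sq_real (hw.2 _ (hw.aeval_sub_mem hq hqs))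
  rw [add_sub_cancel] at hpyth
  exact (mul_self_le_mul_self_iff (norm_nonneg _) (norm_nonneg _)).2
    (by nlinarith [mul_self_nonneg ‖mulv (aeval A q) x - w‖])

lemma ne_zero (hw : IsArnoldiProj A s x w) (hx : GradeExceeds A s x) : w ≠ 0 := by
  rintro rfl
  obtain ⟨r, hr, hrx⟩ := mem_krylov_iff.1 (by simpa using (Krylov A s x).neg_mem hw.1)
  refine hx (X ^ s - r) (monic_X_pow_sub hr).ne_zero ?_ ?_
  · exact (natDegree_sub_le _ _).trans
      (max_le (natDegree_X_pow_le s) (natDegree_le_of_degree_le hr.le))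
  · rw [map_sub, map_pow, aeval_X, mulv_sub_left, hrx, sub_self]

lemma krylov_transpose_le_orthogonal (hw : IsArnoldiProj A s x w) (c : ℝ) :
    Krylov Aᵀ s (c • w) ≤ (ℝ ∙ x)ᗮ := by
  refine Submodule.span_le.2 ?_
  rintro _ ⟨i, rfl⟩
  rw [SetLike.mem_coe, Submodule.mem_orthogonal_singleton_iff_inner_left,
    inner_mulv_transpose_pow, real_inner_smul_left, hw.2 _ (Submodule.subset_span ⟨i, rfl⟩),
    mul_zero]

lemma inner_transpose (hw : IsArnoldiProj A s x w) (hy : IsArnoldiProj Aᵀ s (‖w‖⁻¹ • w) y) :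
    inner ℝ y x = ‖w‖ := by
  have hK : inner ℝ (y - mulv (Aᵀ ^ s) (‖w‖⁻¹ • w)) x = 0 :=
    Submodule.mem_orthogonal_singleton_iff_inner_left.1 (hw.krylov_transpose_le_orthogonal _ hy.1)
  rw [inner_sub_left, inner_mulv_transpose_pow, real_inner_smul_left, hw.inner_mulv_pow] at hK
  rcases eq_or_ne ‖w‖ 0 with h0 | h0
  · rw [h0] at hK ⊢; simpa using hK
  · field_simp at hK; linarith

lemma norm_le_of_transpose (hw : IsArnoldiProj A s x w) (hy : IsArnoldiProj Aᵀ s (‖w‖⁻¹ • w) y)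
    (hx : ‖x‖ = 1) : ‖w‖ ≤ ‖y‖ := by
  simpa [hw.inner_transpose hy, hx] using real_inner_le_norm y x

end IsArnoldiProj

lemma continuousAt_aproj {A : Matrix ι ι ℝ} {s : ℕ} {x : EuclideanSpace ℝ ι}
    (hx : GradeExceeds A s x) : ContinuousAt (aproj A s) x :=
  (continuous_mulv _).continuousAt.sub <| continuousAt_starProjection_span
    (b := fun x (i : Fin s) => mulv (A ^ (i : ℕ)) x) (continuous_pi fun _ => continuous_mulv _)
    (continuous_mulv _) (linearIndependent_krylov hx)

lemma continuousAt_TA {A : Matrix ι ι ℝ} {s : ℕ} {x : EuclideanSpace ℝ ι}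
    (hx : GradeExceeds A s x) : ContinuousAt (TA A s) x :=
  ((continuousAt_aproj hx).norm.inv₀ (norm_ne_zero_iff.2
    ((isArnoldiProj_aproj A s x).ne_zero hx))).smul (continuousAt_aproj hx)

namespace ACI

variable {A : Matrix ι ι ℝ} {s : ℕ} {v wt w vt : ℕ → EuclideanSpace ℝ ι}

lemma w_eq_TA (h : ACI A s v wt w vt) (k : ℕ) : w k = TA A s (v k) := by
  rw [h.2.1 k, TA, (h.1 k).unique (isArnoldiProj_aproj A s (v k))]

lemma v_succ_eq_TA (h : ACI A s v wt w vt) (k : ℕ) : v (k + 1) = TA Aᵀ s (w k) := by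
  rw [h.2.2.2 k, TA, (h.2.2.1 k).unique (isArnoldiProj_aproj Aᵀ s (w k))]

lemma inner_v_succ (h : ACI A s v wt w vt) (k : ℕ) :
    inner ℝ (v (k + 1)) (v k) = ‖wt k‖ / ‖vt (k + 1)‖ := by
  rw [h.2.2.2 k, real_inner_smul_left, (h.1 k).inner_transpose (h.2.1 k ▸ h.2.2.1 k),
    inv_mul_eq_div]

lemma norm_wt_le_norm_vt (h : ACI A s v wt w vt) {k : ℕ} (hk : ‖v k‖ = 1) :
    ‖wt k‖ ≤ ‖vt (k + 1)‖ :=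
  (h.1 k).norm_le_of_transpose (h.2.1 k ▸ h.2.2.1 k) hk

lemma norm_vt_le_norm_wt (h : ACI A s v wt w vt) {k : ℕ} (hk : ‖w k‖ = 1) :
    ‖vt (k + 1)‖ ≤ ‖wt (k + 1)‖ :=
  (h.2.2.1 k).norm_le_of_transpose
    (by rw [transpose_transpose, ← h.2.2.2 k]; exact h.1 (k + 1)) hk

lemma norm_wt_zero_pos (h : ACI A s v wt w vt) (hg : GradeExceeds A s (v 0)) : 0 < ‖wt 0‖ :=
  norm_pos_iff.2 ((h.1 0).ne_zero hg)

lemma norm_v_eq_one_and_norm_wt_zero_le (h : ACI A s v wt w vt) (hv0 : ‖v 0‖ = 1)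
    (hg : GradeExceeds A s (v 0)) (k : ℕ) : ‖v k‖ = 1 ∧ ‖wt 0‖ ≤ ‖wt k‖ := by
  have hpos := h.norm_wt_zero_pos hg
  induction k with
  | zero => exact ⟨hv0, le_rfl⟩
  | succ k ih =>
    obtain ⟨hvk, hk⟩ := ih
    have hwk : ‖w k‖ = 1 := by
      rw [h.2.1 k]; exact norm_inv_norm_smul (norm_pos_iff.1 (hpos.trans_le hk))
    have hστ := h.norm_wt_le_norm_vt hvk
    refine ⟨?_, hk.trans (hστ.trans (h.norm_vt_le_norm_wt hwk))⟩
    rw [h.2.2.2 k]; exact norm_inv_norm_smul (norm_pos_iff.1 ((hpos.trans_le hk).trans_le hστ))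

lemma norm_v_eq_one (h : ACI A s v wt w vt) (hv0 : ‖v 0‖ = 1) (hg : GradeExceeds A s (v 0))
    (k : ℕ) : ‖v k‖ = 1 :=
  (h.norm_v_eq_one_and_norm_wt_zero_le hv0 hg k).1

lemma norm_wt_zero_le (h : ACI A s v wt w vt) (hv0 : ‖v 0‖ = 1) (hg : GradeExceeds A s (v 0))
    (k : ℕ) : ‖wt 0‖ ≤ ‖wt k‖ :=
  (h.norm_v_eq_one_and_norm_wt_zero_le hv0 hg k).2

lemma norm_w_eq_one (h : ACI A s v wt w vt) (hv0 : ‖v 0‖ = 1) (hg : GradeExceeds A s (v 0))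
    (k : ℕ) : ‖w k‖ = 1 := by
  rw [h.2.1 k]
  exact norm_inv_norm_smul
    (norm_pos_iff.1 ((h.norm_wt_zero_pos hg).trans_le (h.norm_wt_zero_le hv0 hg k)))

lemma norm_wt_zero_le_aeval (h : ACI A s v wt w vt) (hv0 : ‖v 0‖ = 1)
    (hg : GradeExceeds A s (v 0)) (k : ℕ) {q : ℝ[X]} (hq : q.Monic) (hqs : q.natDegree = s) :
    ‖wt 0‖ ≤ ‖mulv (aeval A q) (v k)‖ :=
  (h.norm_wt_zero_le hv0 hg k).trans ((h.1 k).norm_le hq hqs)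

lemma norm_wt_zero_le_aeval_transpose (h : ACI A s v wt w vt) (hv0 : ‖v 0‖ = 1)
    (hg : GradeExceeds A s (v 0)) (k : ℕ) {q : ℝ[X]} (hq : q.Monic) (hqs : q.natDegree = s) :
    ‖wt 0‖ ≤ ‖mulv (aeval Aᵀ q) (w k)‖ :=
  (h.norm_wt_zero_le hv0 hg k).trans <|
    (h.norm_wt_le_norm_vt (h.norm_v_eq_one hv0 hg k)).trans ((h.2.2.1 k).norm_le hq hqs)

lemma norm_wt_le_opNorm (h : ACI A s v wt w vt) {k : ℕ} (hk : ‖v k‖ = 1) :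
    ‖wt k‖ ≤ ‖Matrix.toEuclideanCLM (𝕜 := ℝ) (A ^ s)‖ := by
  have := (h.1 k).norm_le (monic_X_pow s) (natDegree_X_pow s)
  rw [map_pow, aeval_X, mulv_eq_toEuclideanCLM] at this
  simpa [hk] using this.trans (ContinuousLinearMap.le_opNorm _ (v k))

lemma tendsto_v_succ_sub (h : ACI A s v wt w vt) (hv0 : ‖v 0‖ = 1)
    (hg : GradeExceeds A s (v 0)) : Tendsto (fun k => v (k + 1) - v k) atTop (𝓝 0) := by
  have hv := h.norm_v_eq_one hv0 hg
  have hστ k : ‖wt k‖ ≤ ‖vt (k + 1)‖ := h.norm_wt_le_norm_vt (hv k)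
  have hτσ k : ‖vt (k + 1)‖ ≤ ‖wt (k + 1)‖ := h.norm_vt_le_norm_wt (h.norm_w_eq_one hv0 hg k)
  have hmono : Monotone fun k => ‖wt k‖ :=
    monotone_nat_of_le_succ fun k => (hστ k).trans (hτσ k)
  have hσ := tendsto_atTop_ciSup hmono
    ⟨_, Set.forall_mem_range.2 fun k => h.norm_wt_le_opNorm (hv k)⟩
  have hpos := (h.norm_wt_zero_pos hg).trans_le (hmono.ge_of_tendsto hσ 0)
  have hτ := tendsto_of_tendsto_of_tendsto_of_le_of_le hσ
    (hσ.comp (tendsto_add_atTop_nat 1)) hστ hτσ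
  refine tendsto_sub_nhds_zero_of_inner_tendsto_one (fun k => hv (k + 1)) hv ?_
  simpa [h.inner_v_succ, hpos.ne', Pi.div_def] using hσ.div hτ hpos.ne'

end ACI

theorem aci_limit_fixed_point_general {n : ℕ} (A : Matrix (Fin n) (Fin n) ℝ) (s : ℕ)
    (v wt w vt : ℕ → EuclideanSpace ℝ (Fin n))
    (hv0 : ‖v 0‖ = 1) (hg : s + 1 ≤ vgrade A (v 0))
    (haci : ACI A s v wt w vt)
    (vstar : EuclideanSpace ℝ (Fin n))
    (hlim : ∃ φ : ℕ → ℕ, StrictMono φ ∧ Tendsto (v ∘ φ) atTop (𝓝 vstar)) :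
    vstar = TA Aᵀ s (TA A s vstar) ∧ ‖vstar‖ = 1 ∧ s + 1 ≤ vgrade A vstar := by
  obtain ⟨φ, hφ, hv⟩ := hlim
  rw [le_vgrade_iff] at hg ⊢
  have hvstar : GradeExceeds A s vstar := gradeExceeds_of_tendsto hv
    (haci.norm_wt_zero_pos hg) fun j _ => haci.norm_wt_zero_le_aeval hv0 hg (φ j)
  have hw : Tendsto (w ∘ φ) atTop (𝓝 (TA A s vstar)) := by
    simpa only [Function.comp_def, ← haci.w_eq_TA] using
      (continuousAt_TA hvstar).tendsto.comp hv
  have hwstar : GradeExceeds Aᵀ s (TA A s vstar) := gradeExceeds_of_tendsto hw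
    (haci.norm_wt_zero_pos hg) fun j _ => haci.norm_wt_zero_le_aeval_transpose hv0 hg (φ j)
  have hv_succ : Tendsto (fun j => v (φ j + 1)) atTop (𝓝 vstar) := by
    simpa using hv.add ((haci.tendsto_v_succ_sub hv0 hg).comp hφ.tendsto_atTop)
  have hv_succ' : Tendsto (fun j => v (φ j + 1)) atTop (𝓝 (TA Aᵀ s (TA A s vstar))) := by
    simpa only [Function.comp_def, ← haci.v_succ_eq_TA] using
      (continuousAt_TA hwstar).tendsto.comp hw
  refine ⟨tendsto_nhds_unique hv_succ hv_succ', tendsto_nhds_unique hv.norm ?_, hvstar⟩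
  simp [haci.norm_v_eq_one hv0 hg]

theorem aci_limit_fixed_point {n : ℕ} (A : Matrix (Fin n) (Fin n) ℝ) (s : ℕ)
    (hs1 : 1 ≤ s) (hs2 : s < dmin A)
    (v wt w vt : ℕ → EuclideanSpace ℝ (Fin n))
    (hv0 : ‖v 0‖ = 1) (hg : s + 1 ≤ vgrade A (v 0))
    (haci : ACI A s v wt w vt)
    (vstar : EuclideanSpace ℝ (Fin n))
    (hlim : ∃ φ : ℕ → ℕ, StrictMono φ ∧ Tendsto (v ∘ φ) atTop (𝓝 vstar)) :
    vstar = TA Aᵀ s (TA A s vstar) ∧ ‖vstar‖ = 1 ∧ s + 1 ≤ vgrade A vstar :=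
  aci_limit_fixed_point_general A s v wt w vt hv0 hg haci vstar hlim
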